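/- arXiv:2106.15667 — 2 statements merged into one kernel-verified Lean document; each statement's English description precedes it below -/
import Mathlib

section
/- Let K be a quadratic field with Galois group G = {1, σ} of order 2 over ℚ, and let K₊* be the group of totally positive elements of K*. Then the first group cohomology H¹(G, K₊*) vanishes. -/
open NumberField

/-- The subgroup of totally positive elements of `Kˣ`. -/
def totallyPositiveUnits (K : Type*) [Field K] : Subgroup Kˣ where
  carrier := {x | ∀ φ : K →+* ℝ, 0 < φ x}
  one_mem' := fun φ => by simp
  mul_mem' := by
    intro a b ha hb φ
    rw [Units.val_mul, map_mul]
    exact mul_pos (ha φ) (hb φ)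
  inv_mem' := by
    intro a ha φ
    rw [Units.val_inv_eq_inv_val, map_inv₀]
    exact inv_pos.2 (ha φ)

/-!
Coboundaries `y / σ y` are cocycles because `σ² = 1`. Conversely, if `x · σ x = 1` then
`y = 1 + x` satisfies `y / σ y = x` (Hilbert 90 for a group of order 2), and `y` is totally
positive together with `x`. This fails only for `x = -1`; but if `-1` is totally positive then `K`
has no real embeddings, every unit is totally positive, and `y = a - σ a` with `σ a ≠ a` works.
-/

theorem mul_map_mul_inv_map_eq_one {G : Type*} [CommGroup G] (f : G →* G)
    (hf : ∀ g, f (f g) = g) (g : G) : g * (f g)⁻¹ * f (g * (f g)⁻¹) = 1 := by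
  rw [map_mul, map_inv, hf]
  group

theorem totallyPositiveUnits_eq_top_of_neg_one_mem {K : Type*} [Field K]
    (h : -1 ∈ totallyPositiveUnits K) : totallyPositiveUnits K = ⊤ := by
  refine eq_top_iff.mpr fun _ _ φ => absurd (h φ) ?_
  simp

section Involution

variable {K : Type*} [Field K] (σ : K →+* K)

theorem one_add_div_map_one_add {x : K} (hx : x * σ x = 1) (h : 1 + x ≠ 0) :
    (1 + x) / σ (1 + x) = x := by
  have hσ : σ (1 + x) = (1 + x) * σ x := by rw [map_add, map_one, add_mul, one_mul, hx, add_comm]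
  rw [hσ, div_mul_cancel_left₀ h, eq_inv_of_mul_eq_one_right hx, inv_inv]

theorem sub_map_div_map_sub_map (hinv : ∀ a, σ (σ a) = a) {a : K} (ha : σ a ≠ a) :
    (a - σ a) / σ (a - σ a) = -1 := by
  have h : a - σ a ≠ 0 := sub_ne_zero.mpr ha.symm
  rw [map_sub, hinv, ← neg_sub a (σ a), div_neg, div_self h]

theorem exists_mem_totallyPositiveUnits_eq_div_map (hinv : ∀ a, σ (σ a) = a) {a : K}
    (ha : σ a ≠ a) {x : Kˣ} (hx : x ∈ totallyPositiveUnits K) (h : (x : K) * σ x = 1) :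
    ∃ y ∈ totallyPositiveUnits K, (x : K) = y / σ y := by
  by_cases h1 : 1 + (x : K) = 0
  · have hx1 : x = -1 := Units.ext <| by
      rw [Units.val_neg, Units.val_one]; linear_combination h1
    have htop := totallyPositiveUnits_eq_top_of_neg_one_mem (hx1 ▸ hx)
    refine ⟨Units.mk0 _ (sub_ne_zero.mpr ha.symm), htop ▸ Subgroup.mem_top _, ?_⟩
    rw [Units.val_mk0, sub_map_div_map_sub_map σ hinv ha, hx1, Units.val_neg, Units.val_one]
  · refine ⟨Units.mk0 _ h1, fun φ => ?_, (one_add_div_map_one_add σ h h1).symm⟩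
    rw [Units.val_mk0, map_add, map_one]
    linarith [hx φ]

end Involution

theorem h1_totally_positive_vanishes_general (K : Type*) [Field K] [NumberField K]
    (σ : K ≃ₐ[ℚ] K) (hσ : σ ≠ AlgEquiv.refl) (hinv : ∀ a : K, σ (σ a) = a) :
    ∀ x ∈ totallyPositiveUnits K,
      (x * Units.map σ.toAlgHom.toRingHom.toMonoidHom x = 1 ↔
        ∃ y ∈ totallyPositiveUnits K,
          x = y * (Units.map σ.toAlgHom.toRingHom.toMonoidHom y)⁻¹) := by
  intro x hx
  constructor
  · intro h
    obtain ⟨a, ha⟩ := DFunLike.ne_iff.mp hσ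
    obtain ⟨y, hy, hxy⟩ := exists_mem_totallyPositiveUnits_eq_div_map (σ : K →+* K) hinv ha hx
      (by simpa using congrArg Units.val h)
    exact ⟨y, hy, Units.ext (by simpa [div_eq_mul_inv] using hxy)⟩
  · rintro ⟨y, -, rfl⟩
    exact mul_map_mul_inv_map_eq_one _ (fun y => Units.ext (hinv y)) y

/-- `H¹(G, K₊*) = 0` for a quadratic field `K` with Galois group `G = {1, σ}`:
in the multiplicative `G`-module `K₊*` of totally positive elements, the kernel of
`1 + σ` (i.e. `x ↦ x·σ(x)`) coincides with the image of `1 − σ` (i.e. `y ↦ y·σ(y)⁻¹`),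
so `H¹(G, K₊*) = ker(1+σ)/im(1−σ)` vanishes. -/
theorem h1_totally_positive_vanishes (K : Type*) [Field K] [NumberField K]
    (hK : Module.finrank ℚ K = 2)
    (σ : K ≃ₐ[ℚ] K) (hσ : σ ≠ AlgEquiv.refl) (hinv : ∀ a : K, σ (σ a) = a) :
    ∀ x ∈ totallyPositiveUnits K,
      (x * Units.map σ.toAlgHom.toRingHom.toMonoidHom x = 1 ↔
        ∃ y ∈ totallyPositiveUnits K,
          x = y * (Units.map σ.toAlgHom.toRingHom.toMonoidHom y)⁻¹) :=
  h1_totally_positive_vanishes_general K σ hσ hinv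
end

section
/- Let K be a quadratic field with Galois group G of order 2. Then H¹(G, K₊*/O₊*) = 0, where O₊* is the group of totally positive units. -/
open NumberField

/-- The subgroup `O₊*` of `Kˣ`: totally positive units of the ring of integers. -/
def totallyPositiveIntegerUnits (K : Type*) [Field K] [NumberField K] : Subgroup Kˣ where
  carrier := {x | (∃ u : (𝓞 K)ˣ, algebraMap (𝓞 K) K u = (x : K)) ∧ ∀ φ : K →+* ℝ, 0 < φ x}
  one_mem' := ⟨⟨1, by simp⟩, fun φ => by simp⟩
  mul_mem' := by
    rintro a b ⟨⟨u, hu⟩, ha⟩ ⟨⟨v, hv⟩, hb⟩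
    refine ⟨⟨u * v, ?_⟩, fun φ => ?_⟩
    · rw [Units.val_mul, map_mul, hu, hv, Units.val_mul]
    · rw [Units.val_mul, map_mul]
      exact mul_pos (ha φ) (hb φ)
  inv_mem' := by
    rintro a ⟨⟨u, hu⟩, ha⟩
    refine ⟨⟨u⁻¹, ?_⟩, fun φ => ?_⟩
    · rw [Units.val_inv_eq_inv_val, map_units_inv, hu]
    · rw [Units.val_inv_eq_inv_val, map_inv₀]
      exact inv_pos.2 (ha φ)

/-!
If `x·σ(x)` is a totally positive unit, it is fixed by `σ`, hence rational, hence `±1`. It is not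
`-1`: at a real embedding it is positive, and at a complex embedding `ψ` the automorphism `σ` acts
as complex conjugation, so `ψ(x·σ(x)) = |ψ x|²`. Hilbert 90 with the explicit witness `y = 1 + x`
then writes `x = y/σ(y)`; the one exception `x = -1` (totally positive only when `K` is imaginary)
already lies in `O₊*`. Conversely `x·(y/σ(y))⁻¹` has the same norm `x·σ(x)` as `x`, and `O₊*` is
`σ`-stable.
-/

theorem Subalgebra.mem_bot_of_algEquiv_apply_eq {F A : Type*} [Field F] [Ring A] [IsDomain A]
    [Algebra F A] (hp : (Module.finrank F A).Prime) {σ : A ≃ₐ[F] A} (hσ : σ ≠ AlgEquiv.refl)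
    {a : A} (ha : σ a = a) : a ∈ (⊥ : Subalgebra F A) := by
  have := Subalgebra.isSimpleOrder_of_finrank_prime F A hp
  obtain hbot | htop := eq_bot_or_eq_top (AlgHom.equalizer σ.toAlgHom (AlgHom.id F A))
  · exact hbot ▸ ha
  · exact absurd (AlgEquiv.ext fun b => (htop ▸ Algebra.mem_top : b ∈ _)) hσ

theorem mul_map_mul_inv_map_inv_mul_map {G : Type*} [CommGroup G] (S : G →* G)
    (hS : ∀ g, S (S g) = g) (x y : G) :
    x * (y * (S y)⁻¹)⁻¹ * S (x * (y * (S y)⁻¹)⁻¹) = x * S x := by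
  simp [hS, mul_comm, mul_left_comm, mul_assoc]

namespace NumberField

theorem eq_one_or_neg_one_of_algebraMap_eq_coe_unit {K : Type*} [Field K] [NumberField K]
    {q : ℚ} {w : (𝓞 K)ˣ} (h : algebraMap ℚ K q = w) : q = 1 ∨ q = -1 := by
  have exists_int {r : ℚ} {v : (𝓞 K)ˣ} (hr : algebraMap ℚ K r = v) : ∃ n : ℤ, (n : ℚ) = r :=
    IsIntegrallyClosed.isIntegral_iff.1 <| (isIntegral_algebraMap_iff
      (algebraMap ℚ K).injective).1 (hr ▸ RingOfIntegers.isIntegral_coe _)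
  obtain ⟨n, rfl⟩ := exists_int h
  obtain ⟨m, hm⟩ := exists_int (r := (n : ℚ)⁻¹) (v := w⁻¹) (by simp [h])
  have hn0 : (n : ℚ) ≠ 0 := fun h0 => Units.coe_ne_zero w (by simp [← h, h0])
  have hnm : n * m = 1 := by exact_mod_cast (hm ▸ mul_inv_cancel₀ hn0 : (n : ℚ) * m = 1)
  rcases Int.eq_one_or_neg_one_of_mul_eq_one hnm with rfl | rfl <;> simp

theorem isConj_of_not_isReal {K : Type*} [Field K] [NumberField K]
    (hK : Module.finrank ℚ K = 2) {σ : K ≃ₐ[ℚ] K} (hσ : σ ≠ AlgEquiv.refl) {ψ : K →+* ℂ}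
    (hψ : ¬ ComplexEmbedding.IsReal ψ) : ComplexEmbedding.IsConj ψ σ := by
  have hψσ : ψ ≠ ψ.comp σ := fun h =>
    hσ (AlgEquiv.ext fun a => ψ.injective (RingHom.congr_fun h a).symm)
  have hψconj : ψ ≠ ComplexEmbedding.conjugate ψ := Ne.symm hψ
  have hcard : Fintype.card (K →+* ℂ) < 3 := by rw [Embeddings.card, hK]; norm_num
  obtain ⟨i, j, hij, hfij⟩ := Fintype.exists_ne_map_eq_of_card_lt
    ![ψ, ψ.comp σ, ComplexEmbedding.conjugate ψ] hcard
  clear hψ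
  -- `ψ`, `ψ ∘ σ`, `conj ∘ ψ` are three of the two embeddings; only the last two can agree.
  fin_cases i <;> fin_cases j <;> simp_all [ComplexEmbedding.IsConj]

end NumberField

section TotallyPositive

variable {K : Type*} [Field K]

theorem units_map_mem_totallyPositiveUnits (f : K →+* K) {x : Kˣ}
    (hx : x ∈ totallyPositiveUnits K) : Units.map f.toMonoidHom x ∈ totallyPositiveUnits K :=
  fun φ => hx (φ.comp f)

variable [NumberField K]

theorem units_map_mem_totallyPositiveIntegerUnits (f : K →+* K) {x : Kˣ}
    (hx : x ∈ totallyPositiveIntegerUnits K) :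
    Units.map f.toMonoidHom x ∈ totallyPositiveIntegerUnits K := by
  obtain ⟨⟨w, hw⟩, hpos⟩ := hx
  exact ⟨⟨Units.map (RingOfIntegers.mapRingHom f).toMonoidHom w,
    congrArg f hw⟩, fun φ => hpos (φ.comp f)⟩

theorem mem_totallyPositiveIntegerUnits_of_coe_eq_neg_one {x : Kˣ}
    (hx : x ∈ totallyPositiveUnits K) (hx1 : (x : K) = -1) : x ∈ totallyPositiveIntegerUnits K :=
  ⟨⟨-1, by simp [hx1]⟩, hx⟩

theorem mul_apply_ne_neg_one_of_mem_totallyPositiveUnits (hK : Module.finrank ℚ K = 2)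
    {σ : K ≃ₐ[ℚ] K} (hσ : σ ≠ AlgEquiv.refl) {x : Kˣ}
    (hx : x ∈ totallyPositiveUnits K) : (x : K) * σ x ≠ -1 := by
  intro hneg
  by_cases hreal : Nonempty (K →+* ℝ)
  · obtain ⟨φ⟩ := hreal
    have hφσ : 0 < φ (σ x) := hx (φ.comp σ.toAlgHom.toRingHom)
    have := congrArg φ hneg
    rw [map_mul, map_neg, map_one] at this
    linarith [mul_pos (hx φ) hφσ]
  · obtain ⟨ψ⟩ : Nonempty (K →+* ℂ) := by
      rw [← Fintype.card_pos_iff, Embeddings.card, hK]; norm_num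
    have hconj := NumberField.isConj_of_not_isReal hK hσ (ψ := ψ)
      fun hψ => hreal ⟨hψ.embedding⟩
    have := congrArg ψ hneg
    rw [map_mul, hconj.eq, RCLike.star_def, Complex.mul_conj, map_neg, map_one] at this
    have := congrArg Complex.re this
    simp only [Complex.ofReal_re, Complex.neg_re, Complex.one_re] at this
    linarith [Complex.normSq_nonneg (ψ x)]

theorem mul_apply_eq_one_of_mul_mem_totallyPositiveIntegerUnits (hK : Module.finrank ℚ K = 2)
    {σ : K ≃ₐ[ℚ] K} (hσ : σ ≠ AlgEquiv.refl) (hinv : ∀ a : K, σ (σ a) = a) {x : Kˣ}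
    (hx : x ∈ totallyPositiveUnits K)
    (h : x * Units.map σ.toAlgHom.toRingHom.toMonoidHom x ∈ totallyPositiveIntegerUnits K) :
    (x : K) * σ x = 1 := by
  obtain ⟨⟨w, hw⟩, -⟩ := h
  have hfix : σ ((x : K) * σ x) = x * σ x := by rw [map_mul, hinv, mul_comm]
  obtain ⟨q, hq⟩ :=
    Subalgebra.mem_bot_of_algEquiv_apply_eq (hK ▸ Nat.prime_two) hσ hfix
  rcases NumberField.eq_one_or_neg_one_of_algebraMap_eq_coe_unit (hq.trans hw.symm) with rfl | rfl
  · simpa using hq.symm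
  · exact absurd (by simpa using hq.symm)
      (mul_apply_ne_neg_one_of_mem_totallyPositiveUnits hK hσ hx)

theorem exists_mem_totallyPositiveUnits_of_mul_apply_eq_one {σ : K ≃ₐ[ℚ] K} {x : Kˣ}
    (hx : x ∈ totallyPositiveUnits K) (hnorm : (x : K) * σ x = 1) :
    ∃ y ∈ totallyPositiveUnits K,
      x * (y * (Units.map σ.toAlgHom.toRingHom.toMonoidHom y)⁻¹)⁻¹ ∈
        totallyPositiveIntegerUnits K := by
  by_cases hx1 : (x : K) = -1
  · exact ⟨1, one_mem _, by simpa using mem_totallyPositiveIntegerUnits_of_coe_eq_neg_one hx hx1⟩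
  have hy : 1 + (x : K) ≠ 0 := fun h => hx1 (by linear_combination h)
  refine ⟨Units.mk0 (1 + x) hy, fun φ => ?_, ?_⟩
  · simp [add_pos one_pos (hx φ)]
  · convert one_mem (totallyPositiveIntegerUnits K)
    ext
    simp only [AlgHom.toRingHom_eq_coe, AlgEquiv.toAlgHom_toRingHom, RingHom.toMonoidHom_eq_coe,
      mul_inv_rev, inv_inv, Units.val_mul, Units.coe_map, Units.val_mk0, MonoidHom.coe_coe,
      RingHom.coe_coe, map_add, map_one, Units.val_inv_eq_inv_val, Units.val_one]
    rw [← mul_assoc, mul_add, mul_one, hnorm, add_comm, mul_inv_cancel₀ hy]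

end TotallyPositive

/-- `H¹` of `{1, σ}` on `K₊*/O₊*` vanishes: the class of `x` is killed by `1 + σ` iff it lies in
the image of `1 − σ`. -/
theorem h1_Kpos_mod_Opos_vanishes (K : Type*) [Field K] [NumberField K]
    (hK : Module.finrank ℚ K = 2)
    (σ : K ≃ₐ[ℚ] K) (hσ : σ ≠ AlgEquiv.refl) (hinv : ∀ a : K, σ (σ a) = a) :
    ∀ x ∈ totallyPositiveUnits K,
      (x * Units.map σ.toAlgHom.toRingHom.toMonoidHom x ∈ totallyPositiveIntegerUnits K ↔
        ∃ y ∈ totallyPositiveUnits K,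
          x * (y * (Units.map σ.toAlgHom.toRingHom.toMonoidHom y)⁻¹)⁻¹ ∈
            totallyPositiveIntegerUnits K) := by
  intro x hx
  constructor
  · intro h
    exact exists_mem_totallyPositiveUnits_of_mul_apply_eq_one hx
      (mul_apply_eq_one_of_mul_mem_totallyPositiveIntegerUnits hK hσ hinv hx h)
  · rintro ⟨y, -, hmem⟩
    rw [← mul_map_mul_inv_map_inv_mul_map _ (fun g => Units.ext (hinv g)) x y]
    exact mul_mem hmem (units_map_mem_totallyPositiveIntegerUnits _ hmem)
end
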